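/- arXiv:1301.6531 — 3 statements merged into one kernel-verified Lean document; each statement's English description precedes it below -/
import Mathlib

section
/- Let M be a map and let E0 be a bridge of M. Then E0 is a straight edge. -/
open Equiv Polynomial

open scoped Classical

noncomputable section

variable {α : Type*}

/-- `f` is a *pairing* of the finite set `S`: an involution of the ambient type which
moves exactly the elements of `S` (i.e., a fixpoint-free involution of `S`, extended by
the identity outside of `S`); the pairs of the pairing are the orbits `{a, f a}`. -/
def IsPairing (S : Finset α) (f : Equiv.Perm α) : Prop :=
  (∀ a, f (f a) = a) ∧ ∀ a, f a ≠ a ↔ a ∈ S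

/-- The pairing `P_{{s₁,s₂}}` obtained from the pairing `f` by removing the elements
`s₁, s₂` : if `{s₁,s₂}` is a pair of `f` it is simply deleted; otherwise the pairs
containing `s₁` and `s₂` are deleted and the partners `f s₁`, `f s₂` are matched
together. -/
def removeP (f : Equiv.Perm α) (s₁ s₂ : α) : Equiv.Perm α :=
  Equiv.swap s₁ s₂ * Equiv.swap s₁ (f s₂) * Equiv.swap s₂ (f s₁) * f

/-- `t` lies in the polygon of `L(b,w)` containing `s`, in *even position* with
respect to `s`: `t` is obtained from `s` by an odd alternating word in the
involutions `b` and `w`. -/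
def EvenPos (b w : Equiv.Perm α) (s t : α) : Prop :=
  ∃ j : ℤ, t = ((w * b) ^ j * b) s

/-- `t` lies in the polygon of `L(b,w)` containing `s`, in *odd position* with respect
to `s`: `t` is obtained from `s` by an even alternating word in the involutions
`b` and `w`. -/
def OddPos (b w : Equiv.Perm α) (s t : α) : Prop :=
  ∃ j : ℤ, t = ((w * b) ^ j) s

/-- `s` and `t` lie in the same polygon of `L(b,w)`. -/
def SameFace (b w : Equiv.Perm α) (s t : α) : Prop :=
  EvenPos b w s t ∨ OddPos b w s t

/-- The edge `{s,t}` is *straight*: both edge-sides lie in the same face,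
in even position. -/
def IsStraight (b w : Equiv.Perm α) (s t : α) : Prop :=
  SameFace b w s t ∧ EvenPos b w s t

/-- The edge `{s,t}` is *twisted*: both edge-sides lie in the same face,
in odd position. -/
def IsTwisted (b w : Equiv.Perm α) (s t : α) : Prop :=
  SameFace b w s t ∧ OddPos b w s t

/-- The edge `{s,t}` is an *interface* edge: its edge-sides lie in two
different faces. -/
def IsInterface (b w : Equiv.Perm α) (s t : α) : Prop :=
  ¬ SameFace b w s t

/-- The polygon (face) of `L(b,w)` containing `s`, as the set of its edge-sides. -/
def faceOf (S : Finset α) (b w : Equiv.Perm α) (s : α) : Finset α :=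
  S.filter (SameFace b w s)

/-- The collection of polygons (faces) of `L(b,w)`. -/
def faces (S : Finset α) (b w : Equiv.Perm α) : Finset (Finset α) :=
  S.image (faceOf S b w)

/-- The number of polygons (faces) of `L(b,w)`. -/
def numFaces (S : Finset α) (b w : Equiv.Perm α) : ℕ :=
  (faces S b w).card

/-- The *type* of the couple of pairings `(b,w)`: the multiset of half-lengths of the
polygons of `L(b,w)`. -/
def faceType (S : Finset α) (b w : Equiv.Perm α) : Multiset ℕ :=
  (faces S b w).val.map fun F => F.card / 2

/-- `s` and `t` lie in the same connected component of the map `(b,w,e)`: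
`t` is obtained from `s` by applying partner maps in `b`, `w`, `e` repeatedly. -/
def SameComponent (b w e : Equiv.Perm α) (s t : α) : Prop :=
  ∃ g ∈ Subgroup.closure ({b, w, e} : Set (Equiv.Perm α)), g s = t

/-- The number of connected components of the map `(S, b, w, e)`. -/
def numComponents (S : Finset α) (b w e : Equiv.Perm α) : ℕ :=
  (S.image fun s => S.filter (SameComponent b w e s)).card

/-- The number of vertices of the map `(S, b, w, e)`: black vertices are the polygons
of `L(b,e)`, white vertices are the polygons of `L(w,e)`. -/
def numVertices (S : Finset α) (b w e : Equiv.Perm α) : ℕ :=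
  numFaces S b e + numFaces S w e

/-- The number of edges of a map with edge-side set `S`. -/
def numEdges (S : Finset α) : ℕ := S.card / 2

/-- The Euler characteristic `χ(M) = |V(M)| - |E(M)| + |F(M)|` of the map
`M = (S, b, w, e)`. -/
def eulerChar (S : Finset α) (b w e : Equiv.Perm α) : ℤ :=
  (numVertices S b w e : ℤ) - (numEdges S : ℤ) + (numFaces S b w : ℤ)

/-- The quantity `d(M) = 2·(number of connected components of M) - χ(M)`. -/
def dInv (S : Finset α) (b w e : Equiv.Perm α) : ℤ :=
  2 * (numComponents S b w e : ℤ) - eulerChar S b w e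

/-- The edge `{s, e s}` of the map `(b, w, e)` is a *bridge*: either one of its
extremities is a leaf (the pair belongs to `b` or to `w` as well), or its two
extremities lie in different connected components of the map with this edge removed. -/
def IsBridge (b w e : Equiv.Perm α) (s : α) : Prop :=
  (b s = e s ∨ w s = e s) ∨
    ¬ SameComponent (removeP b s (e s)) (removeP w s (e s)) (removeP e s (e s))
        (b s) (w s)

/-- The weight of the edge `{s,t}` in the map with face structure given by `(b,w)`,
as a polynomial in the variable `γ` (over `ℚ`): `1` for a straight edge, `γ` for a
twisted edge, `1/2` for an interface edge. -/
def edgeWeight (b w : Equiv.Perm α) (s t : α) : Polynomial ℚ :=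
  if IsStraight b w s t then 1
  else if IsTwisted b w s t then Polynomial.X
  else Polynomial.C (1 / 2)

/-- The weight `w_{M,≺}` of a map `(b,w,e)` equipped with a history, the latter
encoded as the list of the edges in increasing order (each edge represented by one
of its edge-sides): the product of the weights of the edges, each weight being
computed in the map in which all previous edges have already been removed. -/
def histWeight : Equiv.Perm α → Equiv.Perm α → Equiv.Perm α → List α → Polynomial ℚ
  | _, _, _, [] => 1
  | b, w, e, s :: L =>
      edgeWeight b w s (e s) *
        histWeight (removeP b s (e s)) (removeP w s (e s)) (removeP e s (e s)) L

/-- `L` encodes a *history* (a linear order on the edges) of the map with edge-side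
set `S` and edge pairing `e`: it lists every edge exactly once, each edge being
represented by its smaller edge-side. -/
def IsHistory [LinearOrder α] (S : Finset α) (e : Equiv.Perm α) (L : List α) : Prop :=
  L.Nodup ∧ (∀ s ∈ L, s ∈ S ∧ s < e s) ∧ ∀ a ∈ S, a ∈ L ∨ e a ∈ L

/-- The *measure of non-orientability* `w_M` of the map `(S,b,w,e)`: the average of
`w_{M,≺}` over all `n!` histories `≺`, as a polynomial in the variable `γ` over `ℚ`. -/
def mapWeight [LinearOrder α] (S : Finset α) (b w e : Equiv.Perm α) : Polynomial ℚ :=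
  Polynomial.C (1 / ((numEdges S).factorial : ℚ)) *
    ∑ F ∈ (Fintype.piFinset fun _ : Fin (numEdges S) => S).filter
        (fun F => IsHistory S e (List.ofFn F)),
      histWeight b w e (List.ofFn F)

/-- The number of embeddings `N_M(λ)` of the underlying bipartite graph of the map
`(S,b,w,e)` into the Young diagram whose list of row lengths is `lam`: an embedding
maps black vertices (polygons of `L(b,e)`) to rows, white vertices (polygons of
`L(w,e)`) to columns, and each edge to the box at the corresponding intersection;
it is encoded by a pair of functions on edge-sides that are constant on vertices. -/
def NMap (lam : List ℕ) (S : Finset α) (b w e : Equiv.Perm α) : ℕ :=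
  Nat.card {fp : (α → ℕ) × (α → ℕ) //
    (∀ s, s ∉ S → fp.1 s = 0 ∧ fp.2 s = 0) ∧
    (∀ s ∈ S, fp.1 (b s) = fp.1 s ∧ fp.1 (e s) = fp.1 s) ∧
    (∀ s ∈ S, fp.2 (w s) = fp.2 s ∧ fp.2 (e s) = fp.2 s) ∧
    ∀ s ∈ S, fp.2 s < lam.getD (fp.1 s) 0}

/-- The orientability generating series `\widehat{Ch}^{(α)}_π(λ)`, where the face-type
`π` is realized by the fixed couple of pairings `(b,w)` of `S`, `lam` is the list of
row lengths of the Young diagram `λ`, and `a` is the Jack parameter `α`: the sum over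
all pairings `e` of `S` (i.e., over all maps of face-type `π`) of
`(-1/√α)^{|V_•(M)|} (√α)^{|V_∘(M)|} w_M N_M(λ)`, times the sign `(-1)^{ℓ(π)}`,
where `w_M` is evaluated at `γ = (1-α)/√α`. -/
def genSeries [Fintype α] [LinearOrder α] (lam : List ℕ) (S : Finset α)
    (b w : Equiv.Perm α) (a : ℝ) : ℝ :=
  (-1 : ℝ) ^ numFaces S b w *
    ∑ e ∈ Finset.univ.filter fun e : Equiv.Perm α => IsPairing S e,
      (-1 / Real.sqrt a) ^ numFaces S b e * (Real.sqrt a) ^ numFaces S w e *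
        Polynomial.aeval ((1 - a) / Real.sqrt a) (mapWeight S b w e) *
          (NMap lam S b w e : ℝ)

/-- The number of embeddings `N_G(λ)` of the bipartite graph `G` with black vertex set
`ι`, white vertex set `κ` and edge relation `Edg` into the Young diagram whose list of
row lengths is `lam`: black vertices are mapped to rows of `λ`, white vertices to
columns of `λ`, and every edge to the box at the corresponding intersection, which
must belong to `λ`. -/
def NGraph {ι κ : Type*} (lam : List ℕ) (Edg : ι → κ → Prop) : ℕ :=
  Nat.card {fp : (ι → ℕ) × (κ → ℕ) //
    (∀ u, 0 < lam.getD (fp.1 u) 0) ∧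
    (∀ v, ∃ i, fp.2 v < lam.getD i 0) ∧
    ∀ u v, Edg u v → fp.2 v < lam.getD (fp.1 u) 0}

/-!
Leaves are straight (`t = b s` or `t = w s` is in even position with respect to `s`), so
suppose the edge `{s, t}` is neither straight nor a leaf. Walk around the face of `s` from
`b s`, alternating `w` and `b`. The points reached after a `b`-step are exactly the points in
even position with respect to `s`, so they are never `t` (the edge is not straight) and never
`s` (by parity, no point is in even position with respect to itself). Every other step is a
step of the reduced pairings `b_{s,t}`, `w_{s,t}` as well, except a `w`-step landing on `s` or
`t`; the walk then continues from `b s` resp. `b t`, which `b_{s,t}` matches with each other.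
The face being finite, the walk comes back to `w s`, so `b s` and `w s` stay connected in
`M \ {s, t}`, and the edge is not a bridge.
-/

namespace IsPairing

variable {S : Finset α} {f : Equiv.Perm α}

theorem inv_eq (hf : IsPairing S f) : f⁻¹ = f :=
  inv_eq_of_mul_eq_one_right (Equiv.ext hf.1)

theorem apply_mem_iff (hf : IsPairing S f) {x : α} : f x ∈ S ↔ x ∈ S := by
  rw [← hf.2, ← hf.2, hf.1, ne_comm]

theorem apply_ne (hf : IsPairing S f) {x : α} (hx : x ∈ S) : f x ≠ x :=
  (hf.2 x).mpr hx

end IsPairing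

section Orbit

variable {S : Finset α} {c : Equiv.Perm α}

theorem zpow_apply_mem_of_apply_mem_iff (hc : ∀ x, c x ∈ S ↔ x ∈ S) (j : ℤ) {x : α}
    (hx : x ∈ S) : (c ^ j) x ∈ S := by
  simpa using (((c.subtypePerm hc) ^ j) ⟨x, hx⟩).2

theorem exists_pow_apply_eq_self_of_apply_mem_iff (hc : ∀ x, c x ∈ S ↔ x ∈ S) {x : α}
    (hx : x ∈ S) : ∃ n, 0 < n ∧ (c ^ n) x = x := by
  obtain ⟨n, hn, hpow⟩ := (isOfFinOrder_of_finite (c.subtypePerm hc)).exists_pow_eq_one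
  refine ⟨n, hn, ?_⟩
  simpa using congrArg (fun g : Equiv.Perm S => (g ⟨x, hx⟩ : α)) hpow

end Orbit

section RemoveP

variable {f : Equiv.Perm α} {s t : α}

theorem removeP_apply_of_ne {x : α} (hxs : x ≠ s) (hxt : x ≠ t) (hfxs : f x ≠ s)
    (hfxt : f x ≠ t) : removeP f s t x = f x := by
  have hfs : f x ≠ f s := fun h => hxs (f.injective h)
  have hft : f x ≠ f t := fun h => hxt (f.injective h)
  simp only [removeP, Equiv.Perm.mul_apply]
  rw [Equiv.swap_apply_of_ne_of_ne hfxt hfs, Equiv.swap_apply_of_ne_of_ne hfxs hft,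
    Equiv.swap_apply_of_ne_of_ne hfxs hfxt]

theorem removeP_apply_left (hst : s ≠ t) (ht : f t ≠ t) : removeP f s t s = s := by
  simp only [removeP, Equiv.Perm.mul_apply]
  rw [Equiv.swap_apply_right, Equiv.swap_apply_of_ne_of_ne hst.symm ht.symm,
    Equiv.swap_apply_right]

theorem removeP_apply_right (hst : s ≠ t) (ht : f t ≠ t) : removeP f s t t = t := by
  have hft : f t ≠ f s := fun h => hst (f.injective h).symm
  simp only [removeP, Equiv.Perm.mul_apply]
  rw [Equiv.swap_apply_of_ne_of_ne ht hft, Equiv.swap_apply_right, Equiv.swap_apply_left]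

theorem removeP_apply_apply_left (hf : ∀ a, f (f a) = a) (hst : s ≠ t) (hs : f s ≠ s)
    (hfst : f s ≠ t) (ht : f t ≠ t) : removeP f s t (f s) = f t := by
  have hfts : f t ≠ s := fun h => hfst (h ▸ hf t)
  simp only [removeP, Equiv.Perm.mul_apply]
  rw [hf s, Equiv.swap_apply_of_ne_of_ne hst hs.symm, Equiv.swap_apply_left,
    Equiv.swap_apply_of_ne_of_ne hfts ht]

end RemoveP

namespace SameComponent

variable {b w e : Equiv.Perm α} {x y z : α}

theorem refl (b w e : Equiv.Perm α) (x : α) : SameComponent b w e x x :=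
  ⟨1, Subgroup.one_mem _, rfl⟩

theorem trans (hxy : SameComponent b w e x y) (hyz : SameComponent b w e y z) :
    SameComponent b w e x z := by
  obtain ⟨g, hg, rfl⟩ := hxy
  obtain ⟨g', hg', rfl⟩ := hyz
  exact ⟨g' * g, Subgroup.mul_mem _ hg' hg, rfl⟩

theorem b_apply_right (h : SameComponent b w e x y) : SameComponent b w e x (b y) :=
  h.trans ⟨b, Subgroup.subset_closure (by simp), rfl⟩

theorem w_apply_right (h : SameComponent b w e x y) : SameComponent b w e x (w y) :=
  h.trans ⟨w, Subgroup.subset_closure (by simp), rfl⟩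

theorem eq_of_apply_eq_self (h : SameComponent b w e x y) (hb : b y = y) (hw : w y = y)
    (he : e y = y) : x = y := by
  obtain ⟨g, hg, rfl⟩ := h
  have hstab : Subgroup.closure {b, w, e} ≤ MulAction.stabilizer (Equiv.Perm α) (g x) := by
    rw [Subgroup.closure_le]
    rintro _ (rfl | rfl | rfl) <;> assumption
  have hfix : g⁻¹ (g x) = g x := hstab (inv_mem hg)
  simpa using hfix

end SameComponent

section Position

variable {S : Finset α} {b w : Equiv.Perm α} {s t : α}

theorem isStraight_iff_evenPos : IsStraight b w s t ↔ EvenPos b w s t :=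
  ⟨And.right, fun h => ⟨Or.inl h, h⟩⟩

theorem evenPos_apply_left : EvenPos b w s (b s) :=
  ⟨0, by simp⟩

theorem evenPos_apply_right (hb : IsPairing S b) : EvenPos b w s (w s) :=
  ⟨1, by simp [hb.1]⟩

theorem evenPos_mul_pow_apply (hb : IsPairing S b) (hw : IsPairing S w) (n : ℕ) :
    EvenPos b w s (((b * w) ^ n) (b s)) :=
  ⟨-n, by rw [zpow_neg, zpow_natCast, ← inv_pow, mul_inv_rev, hb.inv_eq, hw.inv_eq]; rfl⟩

theorem not_evenPos_self (hb : IsPairing S b) (hw : IsPairing S w) (hs : s ∈ S) :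
    ¬ EvenPos b w s s := by
  rintro ⟨j, hj⟩
  set c := w * b
  have hcS : ∀ x, c x ∈ S ↔ x ∈ S := fun _ => hw.apply_mem_iff.trans hb.apply_mem_iff
  have hconj : ∀ p : ℤ, c ^ p * b = b * c ^ (-p) := by
    have h : SemiconjBy b c c⁻¹ := by
      rw [SemiconjBy, mul_inv_rev, hb.inv_eq, hw.inv_eq, mul_assoc]
    intro p
    have h' := (h.zpow_right (-p)).eq
    rw [inv_zpow', neg_neg] at h'
    exact h'.symm
  -- for `j = 2q` resp. `2q + 1`, the point `c ^ (-q) s` of `S` would be fixed by `b` resp. `w`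
  set z := (c ^ (-(j / 2))) s
  have hz : z ∈ S := zpow_apply_mem_of_apply_mem_iff hcS _ hs
  have hzj : z = (c ^ (j - j / 2) * b) s := by
    rw [show j - j / 2 = -(j / 2) + j by ring, zpow_add, mul_assoc, Equiv.Perm.mul_apply,
      ← hj]
  rcases Int.emod_two_eq_zero_or_one j with hpar | hpar
  · refine hb.apply_ne hz ?_
    calc b z = b ((c ^ (-(j - j / 2))) s) := by rw [show -(j - j / 2) = -(j / 2) by omega]
      _ = z := by rw [hzj, hconj, Equiv.Perm.mul_apply]
  · refine hw.apply_ne hz ?_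
    symm
    calc z = (c * (c ^ (j / 2) * b)) s := by
          rw [hzj, show j - j / 2 = 1 + j / 2 by omega, zpow_add, zpow_one, mul_assoc]
      _ = w (b (b z)) := by rw [hconj]; rfl
      _ = w z := by rw [hb.1]

end Position

section Bridge

variable {S : Finset α} {b w e : Equiv.Perm α} {s t : α}

theorem sameComponent_removeP_mul_pow_apply (hb : IsPairing S b) (hw : IsPairing S w)
    (he : IsPairing S e) (hs : s ∈ S) (ht : t ∈ S) (hst : s ≠ t) (hnot : ¬ EvenPos b w s t)
    (n : ℕ) :
    SameComponent (removeP b s t) (removeP w s t) (removeP e s t) (b s)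
      (((b * w) ^ n) (b s)) := by
  have hbst : b s ≠ t := fun h => hnot (h ▸ evenPos_apply_left)
  -- `s` and `t` are fixed by the three reduced pairings, so the component of `b s` avoids them
  have hoff : ∀ y, SameComponent (removeP b s t) (removeP w s t) (removeP e s t) (b s) y →
      y ≠ s ∧ y ≠ t := by
    intro y hy
    constructor <;> rintro rfl
    · exact hb.apply_ne hs (hy.eq_of_apply_eq_self (removeP_apply_left hst (hb.apply_ne ht))
        (removeP_apply_left hst (hw.apply_ne ht)) (removeP_apply_left hst (he.apply_ne ht)))
    · exact hbst (hy.eq_of_apply_eq_self (removeP_apply_right hst (hb.apply_ne ht))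
        (removeP_apply_right hst (hw.apply_ne ht)) (removeP_apply_right hst (he.apply_ne ht)))
  induction n with
  | zero => exact .refl _ _ _ _
  | succ n ih =>
    set z := ((b * w) ^ n) (b s)
    have hnext : ((b * w) ^ (n + 1)) (b s) = b (w z) := by rw [pow_succ']; rfl
    obtain ⟨hzs, hzt⟩ := hoff z ih
    rw [hnext]
    by_cases hwzs : w z = s
    · rw [hwzs]
      exact .refl _ _ _ _
    by_cases hwzt : w z = t
    · rw [hwzt, ← removeP_apply_apply_left hb.1 hst (hb.apply_ne hs) hbst (hb.apply_ne ht)]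
      exact (SameComponent.refl _ _ _ _).b_apply_right
    have hwz : SameComponent (removeP b s t) (removeP w s t) (removeP e s t) (b s) (w z) :=
      removeP_apply_of_ne hzs hzt hwzs hwzt ▸ ih.w_apply_right
    have hbwz_even : EvenPos b w s (b (w z)) := hnext ▸ evenPos_mul_pow_apply hb hw (n + 1)
    have hbwzs : b (w z) ≠ s := fun h => not_evenPos_self hb hw hs (h ▸ hbwz_even)
    have hbwzt : b (w z) ≠ t := fun h => hnot (h ▸ hbwz_even)
    exact removeP_apply_of_ne hwzs hwzt hbwzs hbwzt ▸ hwz.b_apply_right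

theorem sameComponent_removeP_of_not_evenPos (hb : IsPairing S b) (hw : IsPairing S w)
    (he : IsPairing S e) (hs : s ∈ S) (ht : t ∈ S) (hst : s ≠ t) (hnot : ¬ EvenPos b w s t) :
    SameComponent (removeP b s t) (removeP w s t) (removeP e s t) (b s) (w s) := by
  obtain ⟨_ | m, hm, hper⟩ := exists_pow_apply_eq_self_of_apply_mem_iff (c := b * w)
    (fun _ => hb.apply_mem_iff.trans hw.apply_mem_iff) (hw.apply_mem_iff.mpr hs)
  · exact absurd hm (lt_irrefl 0)
  have hws : ((b * w) ^ m) (b s) = w s := by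
    rwa [pow_succ, Equiv.Perm.mul_apply, Equiv.Perm.mul_apply, hw.1] at hper
  exact hws ▸ sameComponent_removeP_mul_pow_apply hb hw he hs ht hst hnot m

end Bridge

/-- Lemma `BridgeStraight`: a bridge of a map is always a
straight edge. -/
theorem bridge_is_straight (S : Finset α) (b w e : Equiv.Perm α)
    (hb : IsPairing S b) (hw : IsPairing S w) (he : IsPairing S e)
    (s : α) (hs : s ∈ S)
    (hbridge : IsBridge b w e s) :
    IsStraight b w s (e s) := by
  rw [isStraight_iff_evenPos]
  by_contra hnot
  rcases hbridge with (hleaf | hleaf) | hsep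
  · exact hnot (hleaf ▸ evenPos_apply_left)
  · exact hnot (hleaf ▸ evenPos_apply_right hb)
  · exact hsep (sameComponent_removeP_of_not_evenPos hb hw he hs (he.apply_mem_iff.mpr hs)
      (he.apply_ne hs).symm hnot)

end
end

section
/- Let M be a map and let E0 = {s1,s2} be a straight edge of M whose edge-sides lie in a face F of M, with 2i edge-sides between s1 and s2 in one direction around F and 2j edge-sides in the other direction (so F has size 2i+2j+2). Then the faces of M \ E0 are obtained from the faces of M by replacing F by two faces of sizes 2i and 2j (where a face of size 0 is omitted), all other faces of M being unchanged. -/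
open Equiv Polynomial

open scoped Classical

noncomputable section

variable {α : Type*}

/-!
Walking around the face `F` of `s₁` alternately along `b` and `w` lists its edge-sides as
`x₀ = s₁, x₁ = b s₁, …, x_{2i+1} = s₂, …, x_{2i+2j+1} = w s₁`, a cycle of length `2i+2j+2`,
since `s₂` is reached after `2i+1` steps one way round and `2j+1` steps the other way.
Removing the edge changes `b` and `w` only at `s₁`, `s₂` and their partners, all of which lie
in `F`, so the other faces survive. In `F`, the `b`-pairs `{x₀, x₁}` and `{x_{2i}, x_{2i+1}}`
are replaced by `{x₁, x_{2i}}`, which closes the arc `x₁ … x_{2i}` into a face; symmetrically,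
the `w`-pair `{x_{2i+2}, x_{2i+2j+1}}` closes the arc `x_{2i+2} … x_{2i+2j+1}`.
-/

open Function Relation Finset

namespace Relation

variable {r r' : α → α → Prop} {A : Set α} {a c : α}

lemma ReflTransGen.mem_of_closed (hA : ∀ x ∈ A, ∀ y, r x y → y ∈ A) (h : ReflTransGen r a c)
    (ha : a ∈ A) : c ∈ A := by
  induction h with
  | refl => exact ha
  | tail _ hxy ih => exact hA _ ih _ hxy

lemma reflTransGen_iff_of_closed (hA : ∀ x ∈ A, ∀ y, r x y → y ∈ A)
    (hr : ∀ x ∈ A, ∀ y, r x y ↔ r' x y) (ha : a ∈ A) :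
    ReflTransGen r a c ↔ ReflTransGen r' a c := by
  have hA' : ∀ x ∈ A, ∀ y, r' x y → y ∈ A := fun x hx y hxy => hA x hx y ((hr x hx y).2 hxy)
  constructor
  · intro h
    induction h with
    | refl => rfl
    | tail hax hxy ih => exact ih.tail ((hr _ (hax.mem_of_closed hA ha) _).1 hxy)
  · intro h
    induction h with
    | refl => rfl
    | tail hax hxy ih => exact ih.tail ((hr _ (hax.mem_of_closed hA' ha) _).2 hxy)

end Relation

lemma SemiconjBy.apply_zpow_apply {c g : Equiv.Perm α} (h : SemiconjBy c g g⁻¹) (j : ℤ) (x : α) :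
    c ((g ^ j) x) = (g ^ (-j)) (c x) := by
  rw [← inv_zpow', ← Equiv.Perm.mul_apply, (h.zpow_right j).eq, Equiv.Perm.mul_apply]

section Involutions

variable {b w : Equiv.Perm α}

lemma mul_inv_eq_of_involutive (hb : Involutive b) (hw : Involutive w) : (w * b)⁻¹ = b * w := by
  rw [mul_inv_rev, inv_eq_of_mul_eq_one_right (Equiv.ext hb),
    inv_eq_of_mul_eq_one_right (Equiv.ext hw)]

lemma semiconjBy_mul_inv (hb : Involutive b) (hw : Involutive w) :
    SemiconjBy b (w * b) (w * b)⁻¹ := by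
  rw [SemiconjBy, mul_inv_eq_of_involutive hb hw, ← mul_assoc]

lemma semiconjBy_mul_inv' (hb : Involutive b) (hw : Involutive w) :
    SemiconjBy w (w * b) (w * b)⁻¹ := by
  simpa only [mul_inv_eq_of_involutive hw hb, inv_inv] using (semiconjBy_mul_inv hw hb).inv_right

end Involutions

section RemoveP

variable {S : Finset α} {f : Equiv.Perm α} {s₁ s₂ t : α}

lemma removeP_apply_of_ne_s5 (hf : Involutive f) (h₁ : t ≠ s₁) (h₂ : t ≠ s₂)
    (h₃ : f t ≠ s₁) (h₄ : f t ≠ s₂) : removeP f s₁ s₂ t = f t := by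
  simp only [removeP, Equiv.Perm.mul_apply]
  rw [Equiv.swap_apply_of_ne_of_ne h₄ (hf.injective.ne h₁),
    Equiv.swap_apply_of_ne_of_ne h₃ (hf.injective.ne h₂), Equiv.swap_apply_of_ne_of_ne h₃ h₄]

lemma removeP_apply_apply_right (hf : Involutive f) (h : s₁ ≠ s₂) (h₁ : f s₁ ≠ s₁)
    (h₂ : f s₁ ≠ s₂) : removeP f s₁ s₂ (f s₂) = f s₁ := by
  simp only [removeP, Equiv.Perm.mul_apply, hf s₂, Equiv.swap_apply_left]
  rw [Equiv.swap_apply_of_ne_of_ne h₁ (hf.injective.ne h), Equiv.swap_apply_of_ne_of_ne h₁ h₂]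

lemma removeP_involutive (hf : Involutive f) (h₁ : f s₁ ≠ s₁) (h₂ : f s₂ ≠ s₂) :
    Involutive (removeP f s₁ s₂) := by
  intro t
  have hinj := hf.injective
  have hff : ∀ a, f (f a) = a := hf
  simp only [removeP, Equiv.Perm.mul_apply, Equiv.swap_apply_def]
  grind

lemma IsPairing.apply_mem (hf : IsPairing S f) (ht : t ∈ S) : f t ∈ S :=
  (hf.2 _).1 fun h => (hf.2 t).2 ht (by rw [← h, hf.1])

lemma IsPairing.removeP_involutive (hf : IsPairing S f) (h₁ : s₁ ∈ S) (h₂ : s₂ ∈ S) :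
    Involutive (removeP f s₁ s₂) :=
  _root_.removeP_involutive hf.1 ((hf.2 s₁).2 h₁) ((hf.2 s₂).2 h₂)

end RemoveP

def faceStep (b w : Equiv.Perm α) (u v : α) : Prop :=
  v = b u ∨ v = w u

section SameFace

variable {S : Finset α} {b w : Equiv.Perm α} {s t u v : α}

lemma faceStep_comm : faceStep b w = faceStep w b :=
  funext₂ fun _ _ => propext or_comm

lemma faceStep_symm (hb : Involutive b) (hw : Involutive w) (h : faceStep b w u v) :
    faceStep b w v u := by
  rcases h with rfl | rfl
  · exact Or.inl (hb u).symm
  · exact Or.inr (hw u).symm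

lemma sameFace_of_faceStep (hb : Involutive b) (hw : Involutive w) (h : SameFace b w s u)
    (huv : faceStep b w u v) : SameFace b w s v := by
  rcases h with ⟨j, rfl⟩ | ⟨j, rfl⟩ <;> rcases huv with rfl | rfl <;>
    simp only [Equiv.Perm.mul_apply, (semiconjBy_mul_inv hb hw).apply_zpow_apply,
      (semiconjBy_mul_inv' hb hw).apply_zpow_apply]
  · exact Or.inr ⟨-j, by rw [hb]⟩
  · exact Or.inr ⟨-j + 1, by rw [zpow_add_one]; rfl⟩
  · exact Or.inl ⟨-j, rfl⟩
  · exact Or.inl ⟨-j + 1, by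
      rw [zpow_add_one, Equiv.Perm.mul_apply, Equiv.Perm.mul_apply, Equiv.Perm.mul_apply, hb]⟩

lemma reflTransGen_faceStep_zpow_apply (hb : Involutive b) (hw : Involutive w) (j : ℤ) (x : α) :
    ReflTransGen (faceStep b w) x (((w * b) ^ j) x) := by
  induction j using Int.induction_on generalizing x with
  | zero => rfl
  | succ n ih =>
    rw [zpow_add_one, Equiv.Perm.mul_apply]
    exact .head (Or.inl rfl) (.head (Or.inr rfl) (ih _))
  | pred n ih =>
    rw [zpow_sub_one, Equiv.Perm.mul_apply, mul_inv_eq_of_involutive hb hw, Equiv.Perm.mul_apply]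
    exact .head (Or.inr rfl) (.head (Or.inl rfl) (ih _))

lemma sameFace_iff_reflTransGen (hb : Involutive b) (hw : Involutive w) :
    SameFace b w s t ↔ ReflTransGen (faceStep b w) s t := by
  constructor
  · rintro (⟨j, rfl⟩ | ⟨j, rfl⟩)
    · exact .head (Or.inl rfl) (reflTransGen_faceStep_zpow_apply hb hw j _)
    · exact reflTransGen_faceStep_zpow_apply hb hw j _
  · intro h
    induction h with
    | refl => exact Or.inr ⟨0, rfl⟩
    | tail _ huv ih => exact sameFace_of_faceStep hb hw ih huv

lemma sameFace_refl : SameFace b w s s := Or.inr ⟨0, rfl⟩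

lemma sameFace_comm (hb : Involutive b) (hw : Involutive w) :
    SameFace b w s t ↔ SameFace w b s t := by
  rw [sameFace_iff_reflTransGen hb hw, sameFace_iff_reflTransGen hw hb, faceStep_comm]

lemma SameFace.symm (hb : Involutive b) (hw : Involutive w) (h : SameFace b w s t) :
    SameFace b w t s := by
  rw [sameFace_iff_reflTransGen hb hw] at h ⊢
  exact reflTransGen_swap.1 (ReflTransGen.mono (fun _ _ => faceStep_symm hb hw) _ _ h)

lemma SameFace.trans (hb : Involutive b) (hw : Involutive w) (h : SameFace b w s t)
    (h' : SameFace b w t u) : SameFace b w s u := by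
  rw [sameFace_iff_reflTransGen hb hw] at h h' ⊢
  exact h.trans h'

lemma faceOf_comm (hb : Involutive b) (hw : Involutive w) : faceOf S b w = faceOf S w b :=
  funext fun _ => filter_congr fun _ _ => sameFace_comm hb hw

lemma faceOf_eq_of_mem (hb : Involutive b) (hw : Involutive w) (ht : t ∈ faceOf S b w s) :
    faceOf S b w t = faceOf S b w s := by
  have hst := (mem_filter.1 ht).2
  exact filter_congr fun _ _ => ⟨hst.trans hb hw, (hst.symm hb hw).trans hb hw⟩

lemma image_faceOf_faceOf (hb : Involutive b) (hw : Involutive w) :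
    (faceOf S b w s).image (faceOf S b w) = ({faceOf S b w s} : Finset _).filter (·.Nonempty) := by
  rcases (faceOf S b w s).eq_empty_or_nonempty with h | h
  · simp [h, filter_singleton]
  · rw [image_congr fun t ht => faceOf_eq_of_mem hb hw ht, image_const h, filter_singleton,
      if_pos h]

lemma image_sdiff_faceOf (hb : Involutive b) (hw : Involutive w) :
    (S \ faceOf S b w s).image (faceOf S b w) = (faces S b w).erase (faceOf S b w s) := by
  ext F
  simp only [faces, mem_image, mem_erase, mem_sdiff]
  constructor
  · rintro ⟨t, ⟨htS, hts⟩, rfl⟩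
    exact ⟨fun h => hts (h ▸ mem_filter.2 ⟨htS, sameFace_refl⟩), t, htS, rfl⟩
  · rintro ⟨hF, t, htS, rfl⟩
    exact ⟨t, ⟨htS, fun hts => hF (faceOf_eq_of_mem hb hw hts)⟩, rfl⟩

end SameFace

/-- `faceSide b w s k` is the `k`-th edge-side around the face of `s`, the first step going
from `s` to its `b`-partner. -/
def faceSide : Equiv.Perm α → Equiv.Perm α → α → ℕ → α
  | _, _, s, 0 => s
  | b, w, s, k + 1 => faceSide w b (b s) k

section FaceSide

variable {S : Finset α} {b w : Equiv.Perm α} {s s₁ s₂ : α} {n : ℕ}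

@[simp] lemma faceSide_zero : faceSide b w s 0 = s := rfl

lemma faceSide_succ (k : ℕ) : faceSide b w s (k + 1) = faceSide w b (b s) k := rfl

lemma faceSide_two_mul_add (k m : ℕ) :
    faceSide b w s (2 * k + m) = faceSide b w (faceSide b w s (2 * k)) m := by
  induction k generalizing s with
  | zero => simp
  | succ k ih =>
    rw [show 2 * (k + 1) + m = 2 * k + m + 2 by ring, show 2 * (k + 1) = 2 * k + 2 by ring]
    exact ih

lemma faceSide_two_mul (k : ℕ) : faceSide b w s (2 * k) = ((w * b) ^ k) s := by
  induction k generalizing s with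
  | zero => rfl
  | succ k ih =>
    rw [show 2 * (k + 1) = 2 * k + 2 by ring, pow_succ, Equiv.Perm.mul_apply]
    exact ih

lemma faceSide_two_mul_add_one (k : ℕ) :
    faceSide b w s (2 * k + 1) = b (faceSide b w s (2 * k)) :=
  faceSide_two_mul_add k 1

lemma faceSide_two_mul_add_two (k : ℕ) :
    faceSide b w s (2 * k + 2) = w (faceSide b w s (2 * k + 1)) := by
  rw [faceSide_two_mul_add, faceSide_two_mul_add_one]; rfl

lemma faceStep_faceSide (k : ℕ) : faceStep b w (faceSide b w s k) (faceSide b w s (k + 1)) := by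
  induction k generalizing b w s with
  | zero => exact Or.inl rfl
  | succ k ih => rw [faceStep_comm]; exact ih

lemma reflTransGen_faceSide (k : ℕ) : ReflTransGen (faceStep b w) s (faceSide b w s k) := by
  induction k with
  | zero => rfl
  | succ k ih => exact ih.tail (faceStep_faceSide k)

lemma faceSide_mem (hb : IsPairing S b) (hw : IsPairing S w) (hs : s ∈ S) (k : ℕ) :
    faceSide b w s k ∈ S := by
  induction k generalizing b w s with
  | zero => exact hs
  | succ k ih => exact ih hw hb (hb.apply_mem hs)

lemma faceSide_periodic (hper : faceSide b w s (2 * n) = s) :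
    Periodic (faceSide b w s) (2 * n) := fun m => by
  rw [add_comm, faceSide_two_mul_add, hper]

lemma faceSide_mem_range (hb : Involutive b) (hw : Involutive w) (hn : 0 < n)
    (hper : faceSide b w s (2 * n) = s) (m : ℕ) :
    b (faceSide b w s m) ∈ Set.range (faceSide b w s) ∧
      w (faceSide b w s m) ∈ Set.range (faceSide b w s) := by
  obtain ⟨k, rfl | rfl⟩ := Nat.even_or_odd' m
  · refine ⟨⟨2 * k + 1, faceSide_two_mul_add_one k⟩, 2 * (k + n - 1) + 1, ?_⟩
    rw [← faceSide_periodic hper (2 * k), show 2 * k + 2 * n = 2 * (k + n - 1) + 2 by omega,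
      faceSide_two_mul_add_two, hw]
  · exact ⟨⟨2 * k, by rw [faceSide_two_mul_add_one, hb]⟩, 2 * k + 2, faceSide_two_mul_add_two k⟩

lemma faceOf_eq_image_faceSide (hb : Involutive b) (hw : Involutive w) (hn : 0 < n)
    (hper : faceSide b w s (2 * n) = s) (hS : ∀ k < 2 * n, faceSide b w s k ∈ S) :
    faceOf S b w s = (range (2 * n)).image (faceSide b w s) := by
  ext t
  simp only [faceOf, mem_filter, mem_image, mem_range]
  constructor
  · rintro ⟨-, hst⟩
    have hclosed : ∀ x ∈ Set.range (faceSide b w s), ∀ y, faceStep b w x y →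
        y ∈ Set.range (faceSide b w s) := by
      rintro _ ⟨m, rfl⟩ y (rfl | rfl)
      exacts [(faceSide_mem_range hb hw hn hper m).1, (faceSide_mem_range hb hw hn hper m).2]
    obtain ⟨m, rfl⟩ := ((sameFace_iff_reflTransGen hb hw).1 hst).mem_of_closed hclosed ⟨0, rfl⟩
    exact ⟨m % (2 * n), Nat.mod_lt _ (by omega), (faceSide_periodic hper).map_mod_nat m⟩
  · rintro ⟨k, hk, rfl⟩
    exact ⟨hS k hk, (sameFace_iff_reflTransGen hb hw).2 (reflTransGen_faceSide k)⟩

lemma faceSide_swap (hb : Involutive b) (hw : Involutive w) (hper : faceSide b w s (2 * n) = s)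
    {m : ℕ} (hm : m ≤ 2 * n) : faceSide w b s m = faceSide b w s (2 * n - m) := by
  induction m with
  | zero => exact hper.symm
  | succ m ih =>
    obtain ⟨k, rfl | rfl⟩ := Nat.even_or_odd' m
    · rw [faceSide_two_mul_add_one, ih (by omega),
        show 2 * n - 2 * k = 2 * (n - k - 1) + 2 by omega, faceSide_two_mul_add_two, hw,
        show 2 * n - (2 * k + 1) = 2 * (n - k - 1) + 1 by omega]
    · rw [faceSide_two_mul_add_two, ih (by omega),
        show 2 * n - (2 * k + 1) = 2 * (n - k - 1) + 1 by omega, faceSide_two_mul_add_one, hb,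
        show 2 * n - (2 * k + 1 + 1) = 2 * (n - k - 1) by omega]

lemma faceSide_removeP (hb : Involutive b) (hw : Involutive w) {k : ℕ}
    (h : ∀ m ≤ k, faceSide b w s m ≠ s₁ ∧ faceSide b w s m ≠ s₂) :
    faceSide (removeP b s₁ s₂) (removeP w s₁ s₂) s k = faceSide b w s k := by
  induction k generalizing b w s with
  | zero => rfl
  | succ k ih =>
    have h₀ : s ≠ s₁ ∧ s ≠ s₂ := h 0 (by omega)
    have h₁ : b s ≠ s₁ ∧ b s ≠ s₂ := h 1 (by omega)
    rw [faceSide_succ, faceSide_succ, removeP_apply_of_ne_s5 hb h₀.1 h₀.2 h₁.1 h₁.2]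
    exact ih hw hb fun m hm => h (m + 1) (by omega)

end FaceSide

section InjOnImage

variable {x : ℕ → α} {L a c d e : ℕ}

lemma card_image_Ico_of_injOn (hx : Set.InjOn x (range L)) (hc : c ≤ L) :
    ((Ico a c).image x).card = c - a := by
  rw [card_image_of_injOn (hx.mono fun m hm => by
    simp only [coe_Ico, Set.mem_Ico, coe_range, Set.mem_Iio] at hm ⊢; omega), Nat.card_Ico]

lemma disjoint_image_Ico_of_injOn (hx : Set.InjOn x (range L)) (hcd : c ≤ d) (hde : d ≤ e)
    (he : e ≤ L) : Disjoint ((Ico a c).image x) ((Ico d e).image x) := by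
  rw [← disjoint_coe, coe_image, coe_image]
  refine Disjoint.image ?_ hx (fun m hm => ?_) (fun m hm => ?_)
  · rw [disjoint_coe, disjoint_left]
    intro m hm hm'
    simp only [mem_Ico] at hm hm'
    omega
  all_goals simp only [coe_Ico, Set.mem_Ico, coe_range, Set.mem_Iio] at hm ⊢; omega

end InjOnImage
section RemoveEdge

variable {S : Finset α} {b w : Equiv.Perm α} {s₁ s₂ t u : α}

lemma sameFace_removeP_iff (hb : Involutive b) (hw : Involutive w)
    (hb' : Involutive (removeP b s₁ s₂)) (hw' : Involutive (removeP w s₁ s₂))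
    (h₁ : ¬ SameFace b w t s₁) (h₂ : ¬ SameFace b w t s₂) :
    SameFace (removeP b s₁ s₂) (removeP w s₁ s₂) t u ↔ SameFace b w t u := by
  rw [sameFace_iff_reflTransGen hb' hw', sameFace_iff_reflTransGen hb hw]
  have hne : ∀ v, ReflTransGen (faceStep b w) t v → v ≠ s₁ ∧ v ≠ s₂ := fun v hv =>
    ⟨by rintro rfl; exact h₁ ((sameFace_iff_reflTransGen hb hw).2 hv),
      by rintro rfl; exact h₂ ((sameFace_iff_reflTransGen hb hw).2 hv)⟩
  refine (reflTransGen_iff_of_closed (A := {v | ReflTransGen (faceStep b w) t v})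
    (fun _ hx _ hxy => ReflTransGen.tail hx hxy) (fun x hx y => ?_) ReflTransGen.refl).symm
  have h₀ := hne x hx
  have hbx := hne _ (ReflTransGen.tail hx (Or.inl rfl))
  have hwx := hne _ (ReflTransGen.tail hx (Or.inr rfl))
  rw [faceStep, faceStep, removeP_apply_of_ne_s5 hb h₀.1 h₀.2 hbx.1 hbx.2,
    removeP_apply_of_ne_s5 hw h₀.1 h₀.2 hwx.1 hwx.2]

lemma faceOf_removeP_of_not_sameFace (hb : Involutive b) (hw : Involutive w)
    (hb' : Involutive (removeP b s₁ s₂)) (hw' : Involutive (removeP w s₁ s₂))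
    (h₁ : ¬ SameFace b w t s₁) (h₂ : ¬ SameFace b w t s₂) :
    faceOf (S \ {s₁, s₂}) (removeP b s₁ s₂) (removeP w s₁ s₂) t = faceOf S b w t := by
  ext u
  simp only [faceOf, mem_filter, mem_sdiff, mem_insert, mem_singleton,
    sameFace_removeP_iff hb hw hb' hw' h₁ h₂]
  constructor
  · rintro ⟨⟨hu, -⟩, htu⟩
    exact ⟨hu, htu⟩
  · rintro ⟨hu, htu⟩
    exact ⟨⟨hu, by rintro (rfl | rfl) <;> contradiction⟩, htu⟩

lemma image_sdiff_faceOf_removeP (hb : Involutive b) (hw : Involutive w)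
    (hb' : Involutive (removeP b s₁ s₂)) (hw' : Involutive (removeP w s₁ s₂))
    (h : SameFace b w s₁ s₂) :
    (S \ faceOf S b w s₁).image (faceOf (S \ {s₁, s₂}) (removeP b s₁ s₂) (removeP w s₁ s₂)) =
      (faces S b w).erase (faceOf S b w s₁) := by
  rw [← image_sdiff_faceOf hb hw]
  refine image_congr fun t ht => ?_
  obtain ⟨htS, hts⟩ := mem_sdiff.1 ht
  have h₁ : ¬ SameFace b w t s₁ := fun h' => hts (mem_filter.2 ⟨htS, h'.symm hb hw⟩)
  exact faceOf_removeP_of_not_sameFace hb hw hb' hw' h₁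
    fun h' => h₁ (h'.trans hb hw (h.symm hb hw))

lemma faces_removeP_eq (hb : Involutive b) (hw : Involutive w)
    (hb' : Involutive (removeP b s₁ s₂)) (hw' : Involutive (removeP w s₁ s₂))
    (hs₁ : s₁ ∈ S) (hs₂ : s₂ ∈ faceOf S b w s₁) {F₁ F₂ : Finset α}
    (hunion : F₁ ∪ F₂ = faceOf S b w s₁ \ {s₁, s₂})
    (hF₁ : F₁.image (faceOf (S \ {s₁, s₂}) (removeP b s₁ s₂) (removeP w s₁ s₂)) =
      ({F₁} : Finset _).filter (·.Nonempty))
    (hF₂ : F₂.image (faceOf (S \ {s₁, s₂}) (removeP b s₁ s₂) (removeP w s₁ s₂)) =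
      ({F₂} : Finset _).filter (·.Nonempty)) :
    faces (S \ {s₁, s₂}) (removeP b s₁ s₂) (removeP w s₁ s₂) =
      (faces S b w).erase (faceOf S b w s₁) ∪ ({F₁, F₂} : Finset _).filter (·.Nonempty) := by
  have hFS : faceOf S b w s₁ ⊆ S := filter_subset _ _
  have hsub : {s₁, s₂} ⊆ faceOf S b w s₁ :=
    insert_subset (mem_filter.2 ⟨hs₁, sameFace_refl⟩) (singleton_subset_iff.2 hs₂)
  calc faces (S \ {s₁, s₂}) (removeP b s₁ s₂) (removeP w s₁ s₂)
      = (S \ faceOf S b w s₁ ∪ (F₁ ∪ F₂)).image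
          (faceOf (S \ {s₁, s₂}) (removeP b s₁ s₂) (removeP w s₁ s₂)) := by
        rw [hunion, sdiff_union_sdiff_cancel hFS hsub]; rfl
    _ = _ := by
        rw [image_union, image_union, hF₁, hF₂,
          image_sdiff_faceOf_removeP hb hw hb' hw' (mem_filter.1 hs₂).2, insert_eq, filter_union]

end RemoveEdge

section StraightEdge

variable {S : Finset α} {b w : Equiv.Perm α} {s₁ s₂ : α} {i j : ℕ}

lemma faceSide_two_mul_add_one_of_eq (hi : s₂ = (b * (w * b) ^ i) s₁) :
    faceSide b w s₁ (2 * i + 1) = s₂ := by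
  rw [hi, faceSide_two_mul_add_one, faceSide_two_mul]; rfl

lemma faceSide_two_mul_eq_self (hb : Involutive b) (hw : Involutive w)
    (hi : s₂ = (b * (w * b) ^ i) s₁) (hj : s₂ = (w * (b * w) ^ j) s₁) :
    faceSide b w s₁ (2 * (i + j + 1)) = s₁ := by
  rw [faceSide_two_mul]
  calc ((w * b) ^ (i + j + 1)) s₁ = ((w * b) ^ j) (w ((b * (w * b) ^ i) s₁)) := by
        rw [show i + j + 1 = j + (i + 1) by ring, pow_add, pow_succ']; rfl
    _ = ((w * b) ^ j) (((w * b)⁻¹ ^ j) s₁) := by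
        rw [← hi, hj, Equiv.Perm.mul_apply, hw, mul_inv_eq_of_involutive hb hw]
    _ = s₁ := by rw [inv_pow, ← Equiv.Perm.mul_apply, mul_inv_cancel, Equiv.Perm.one_apply]

lemma faceOf_eq_image_range_faceSide (hb : IsPairing S b) (hw : IsPairing S w) (hs₁ : s₁ ∈ S)
    (hi : s₂ = (b * (w * b) ^ i) s₁) (hj : s₂ = (w * (b * w) ^ j) s₁) :
    faceOf S b w s₁ = (range (2 * (i + j + 1))).image (faceSide b w s₁) :=
  faceOf_eq_image_faceSide hb.1 hw.1 (by omega) (faceSide_two_mul_eq_self hb.1 hw.1 hi hj)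
    fun k _ => faceSide_mem hb hw hs₁ k

lemma injOn_faceSide (hb : IsPairing S b) (hw : IsPairing S w) (hs₁ : s₁ ∈ S)
    (hi : s₂ = (b * (w * b) ^ i) s₁) (hj : s₂ = (w * (b * w) ^ j) s₁)
    (hsize : (faceOf S b w s₁).card = 2 * i + 2 * j + 2) :
    Set.InjOn (faceSide b w s₁) (range (2 * (i + j + 1))) :=
  card_image_iff.1 <| by
    rw [← faceOf_eq_image_range_faceSide hb hw hs₁ hi hj, hsize, card_range]; ring

lemma faceOf_sdiff_eq_union (hb : IsPairing S b) (hw : IsPairing S w) (hs₁ : s₁ ∈ S)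
    (hi : s₂ = (b * (w * b) ^ i) s₁) (hj : s₂ = (w * (b * w) ^ j) s₁)
    (hsize : (faceOf S b w s₁).card = 2 * i + 2 * j + 2) :
    faceOf S b w s₁ \ {s₁, s₂} = (Ico 1 (2 * i + 1)).image (faceSide b w s₁) ∪
      (Ico (2 * i + 2) (2 * (i + j + 1))).image (faceSide b w s₁) := by
  have hpair : ({s₁, s₂} : Finset α) = ({0, 2 * i + 1} : Finset ℕ).image (faceSide b w s₁) := by
    rw [image_insert, image_singleton, faceSide_zero, faceSide_two_mul_add_one_of_eq hi]
  rw [faceOf_eq_image_range_faceSide hb hw hs₁ hi hj, hpair,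
    ← image_sdiff_of_injOn (injOn_faceSide hb hw hs₁ hi hj hsize)
      (by intro m; simp only [mem_insert, mem_singleton, mem_range]; omega), ← image_union]
  congr 1
  ext m
  simp only [mem_sdiff, mem_range, mem_insert, mem_singleton, mem_union, mem_Ico]
  omega

lemma image_Ico_faceSide_swap (hb : Involutive b) (hw : Involutive w)
    (hi : s₂ = (b * (w * b) ^ i) s₁) (hj : s₂ = (w * (b * w) ^ j) s₁) :
    (Ico 1 (2 * j + 1)).image (faceSide w b s₁) =
      (Ico (2 * i + 2) (2 * (i + j + 1))).image (faceSide b w s₁) := by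
  have hper := faceSide_two_mul_eq_self hb hw hi hj
  ext u
  simp only [mem_image, mem_Ico]
  constructor
  · rintro ⟨m, hm, rfl⟩
    exact ⟨2 * (i + j + 1) - m, by omega, (faceSide_swap hb hw hper (by omega)).symm⟩
  · rintro ⟨m, hm, rfl⟩
    refine ⟨2 * (i + j + 1) - m, by omega, ?_⟩
    rw [faceSide_swap hb hw hper (by omega), Nat.sub_sub_self (by omega)]

lemma faceOf_removeP_apply_left (hb : IsPairing S b) (hw : IsPairing S w) (hs₁ : s₁ ∈ S)
    (hi : s₂ = (b * (w * b) ^ i) s₁) (hj : s₂ = (w * (b * w) ^ j) s₁)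
    (hsize : (faceOf S b w s₁).card = 2 * i + 2 * j + 2) (hi₀ : 0 < i) :
    faceOf (S \ {s₁, s₂}) (removeP b s₁ s₂) (removeP w s₁ s₂) (b s₁) =
      (Ico 1 (2 * i + 1)).image (faceSide b w s₁) := by
  set x := faceSide b w s₁ with hx
  have hinj := injOn_faceSide hb hw hs₁ hi hj hsize
  have hs₂ : x (2 * i + 1) = s₂ := faceSide_two_mul_add_one_of_eq hi
  have hinj' : ∀ {m m'}, m ≤ 2 * i + 1 → m' ≤ 2 * i + 1 → x m = x m' → m = m' :=
    fun hm hm' h => hinj (by simp only [coe_range, Set.mem_Iio]; omega)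
      (by simp only [coe_range, Set.mem_Iio]; omega) h
  have hne : ∀ m, 1 ≤ m → m ≤ 2 * i → x m ≠ s₁ ∧ x m ≠ s₂ := fun m h₁ h₂ =>
    ⟨fun h => absurd (hinj' (m' := 0) (by omega) (by omega) h) (by omega),
      fun h => absurd (hinj' (by omega) le_rfl (h.trans hs₂.symm)) (by omega)⟩
  have hs₁₂ : s₁ ≠ s₂ := fun h =>
    absurd (hinj' (m := 0) (by omega) le_rfl (h.trans hs₂.symm)) (by omega)
  have hs₂S : s₂ ∈ S := hs₂ ▸ faceSide_mem hb hw hs₁ _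
  have hb' := hb.removeP_involutive hs₁ hs₂S
  have hw' := hw.removeP_involutive hs₁ hs₂S
  have hwalk : ∀ k < 2 * i,
      faceSide (removeP w s₁ s₂) (removeP b s₁ s₂) (b s₁) k = x (k + 1) := fun k _ =>
    faceSide_removeP hw.1 hb.1 fun m _ => hne (m + 1) (by omega) (by omega)
  -- the new pairing `removeP b s₁ s₂` matches `b s₂` with `b s₁`
  have hclose : faceSide (removeP w s₁ s₂) (removeP b s₁ s₂) (b s₁) (2 * i) = b s₁ := by
    obtain ⟨k, rfl⟩ : ∃ k, i = k + 1 := ⟨i - 1, by omega⟩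
    have hbs₂ : b s₂ = x (2 * (k + 1)) := by rw [← hs₂, hx, faceSide_two_mul_add_one, hb.1]
    rw [show 2 * (k + 1) = 2 * k + 2 by ring, faceSide_two_mul_add_two, hwalk _ (by omega),
      show 2 * k + 1 + 1 = 2 * (k + 1) by ring, ← hbs₂,
      removeP_apply_apply_right hb.1 hs₁₂ (hne 1 le_rfl (by omega)).1 (hne 1 le_rfl (by omega)).2]
  rw [faceOf_comm hb' hw', faceOf_eq_image_faceSide hw' hb' hi₀ hclose fun k hk => by
    rw [hwalk k hk]
    exact mem_sdiff.2 ⟨faceSide_mem hb hw hs₁ _, by simp [hne (k + 1) (by omega) (by omega)]⟩]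
  calc (range (2 * i)).image (faceSide (removeP w s₁ s₂) (removeP b s₁ s₂) (b s₁))
      = (range (2 * i)).image (x ∘ (· + 1)) := image_congr fun k hk => hwalk k (mem_range.1 hk)
    _ = (Ico 1 (2 * i + 1)).image x := by rw [← image_image, range_eq_Ico, image_add_right_Ico]

end StraightEdge

theorem faces_remove_straight_edge_general (S : Finset α) (b w : Equiv.Perm α)
    (hb : IsPairing S b) (hw : IsPairing S w)
    (s₁ s₂ : α) (hs₁ : s₁ ∈ S)
    (i j : ℕ)
    (hi : s₂ = (b * (w * b) ^ i) s₁)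
    (hj : s₂ = (w * (b * w) ^ j) s₁)
    (hsize : (faceOf S b w s₁).card = 2 * i + 2 * j + 2) :
    ∃ F₁ F₂ : Finset α,
      F₁.card = 2 * i ∧ F₂.card = 2 * j ∧ Disjoint F₁ F₂ ∧
      F₁ ∪ F₂ = faceOf S b w s₁ \ {s₁, s₂} ∧
      faces (S \ {s₁, s₂}) (removeP b s₁ s₂) (removeP w s₁ s₂)
        = (faces S b w).erase (faceOf S b w s₁) ∪
            ({F₁, F₂} : Finset (Finset α)).filter Finset.Nonempty := by
  have hinj := injOn_faceSide hb hw hs₁ hi hj hsize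
  have hsize' : (faceOf S w b s₁).card = 2 * j + 2 * i + 2 := by
    rw [← faceOf_comm hb.1 hw.1]; omega
  have hs₂ : s₂ ∈ faceOf S b w s₁ := by
    rw [faceOf_eq_image_range_faceSide hb hw hs₁ hi hj, ← faceSide_two_mul_add_one_of_eq hi]
    exact mem_image_of_mem _ (mem_range.2 (by omega))
  have hb' := hb.removeP_involutive hs₁ (filter_subset _ _ hs₂)
  have hw' := hw.removeP_involutive hs₁ (filter_subset _ _ hs₂)
  have hunion := faceOf_sdiff_eq_union hb hw hs₁ hi hj hsize
  refine ⟨_, _, by rw [card_image_Ico_of_injOn hinj (by omega)]; omega,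
    by rw [card_image_Ico_of_injOn hinj le_rfl]; omega,
    disjoint_image_Ico_of_injOn hinj (by omega) (by omega) le_rfl, hunion.symm,
    faces_removeP_eq hb.1 hw.1 hb' hw' hs₁ hs₂ hunion.symm ?_ ?_⟩
  · rcases Nat.eq_zero_or_pos i with rfl | hi₀
    · simp [filter_singleton]
    · rw [← faceOf_removeP_apply_left hb hw hs₁ hi hj hsize hi₀, image_faceOf_faceOf hb' hw']
  · rcases Nat.eq_zero_or_pos j with rfl | hj₀
    · simp [filter_singleton, mul_add]
    · rw [← image_Ico_faceSide_swap hb.1 hw.1 hi hj,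
        ← faceOf_removeP_apply_left hw hb hs₁ hj hi hsize' hj₀, ← faceOf_comm hb' hw',
        image_faceOf_faceOf hb' hw']

/-- straight edge removal: let `E₀ = {s₁, s₂}` (with `s₂ = e s₁`)
be a straight edge of the map `M = (S,b,w,e)`, whose edge-sides lie in
the face `F` of `M`, with `2i` edge-sides between `s₁` and `s₂` in one direction
around `F` and `2j` in the other direction (so `F` has size `2i + 2j + 2`).
Then the faces of `M \ E₀` are obtained from those of `M` by replacing `F` by two
faces of sizes `2i` and `2j` (a face of size `0` being omitted), all other faces
being unchanged. -/
theorem faces_remove_straight_edge (S : Finset α) (b w e : Equiv.Perm α)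
    (hb : IsPairing S b) (hw : IsPairing S w) (he : IsPairing S e)
    (s₁ s₂ : α) (hs₁ : s₁ ∈ S) (hedge : e s₁ = s₂)
    (hstraight : IsStraight b w s₁ s₂)
    (i j : ℕ)
    (hi : s₂ = (b * (w * b) ^ i) s₁)
    (hj : s₂ = (w * (b * w) ^ j) s₁)
    (hsize : (faceOf S b w s₁).card = 2 * i + 2 * j + 2) :
    ∃ F₁ F₂ : Finset α,
      F₁.card = 2 * i ∧ F₂.card = 2 * j ∧ Disjoint F₁ F₂ ∧
      F₁ ∪ F₂ = faceOf S b w s₁ \ {s₁, s₂} ∧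
      faces (S \ {s₁, s₂}) (removeP b s₁ s₂) (removeP w s₁ s₂)
        = (faces S b w).erase (faceOf S b w s₁) ∪
            ({F₁, F₂} : Finset (Finset α)).filter Finset.Nonempty :=
  faces_remove_straight_edge_general S b w hb hw s₁ s₂ hs₁ i j hi hj hsize

end
end

section
/- Let M be a map and let E0 be an edge of M both of whose extremities are leaves. Then E0 is straight, and M \ E0 has two fewer vertices, one fewer edge, one fewer face, and one fewer connected component than M; consequently d(M \ E0) = d(M). -/
open Equiv Polynomial

open scoped Classical

noncomputable section

variable {α : Type*}

/-! Since `b`, `w` and `e` all exchange `s` and `e s`, each of them stabilizes the pair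
`{s, e s}`, and `removeP` only multiplies it by the transposition of that pair, which changes
nothing off the pair. Hence `{s, e s}` is at the same time a face of `L(b,w)`, a black and a
white vertex and a connected component of `M`, and all other faces, vertices and components
of `M` are those of `M \ E₀`. So the numbers of faces, edges and components each drop by one
and the number of vertices by two, and these changes cancel in `d`. -/

/-- Packaged as a subgroup of `Perm α × Perm α` so that the relation passes from the pairings
to every word in them. -/
def agreeOff (P : Set α) : Subgroup (Perm α × Perm α) where
  carrier := {g | (∀ x, g.1 x ∈ P ↔ x ∈ P) ∧ ∀ x ∉ P, g.1 x = g.2 x}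
  one_mem' := ⟨fun _ => Iff.rfl, fun _ _ => rfl⟩
  mul_mem' {g h} hg hh := by
    refine ⟨fun x => (hg.1 _).trans (hh.1 x), fun x hx => ?_⟩
    simp only [Prod.fst_mul, Prod.snd_mul, Perm.mul_apply]
    rw [hg.2 _ ((hh.1 x).not.2 hx), hh.2 x hx]
  inv_mem' {g} hg := by
    have hstab : ∀ x, g.1⁻¹ x ∈ P ↔ x ∈ P := fun x => by
      simpa using (hg.1 (g.1⁻¹ x)).symm
    refine ⟨hstab, fun x hx => ?_⟩
    simp only [Prod.fst_inv, Prod.snd_inv]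
    rw [Perm.eq_inv_iff_eq, ← hg.2 _ ((hstab x).not.2 hx)]
    simp

theorem mem_agreeOff_mul {P : Set α} {g σ : Perm α} (hg : ∀ x, g x ∈ P ↔ x ∈ P)
    (hσ : ∀ x ∉ P, σ x = x) : (g, σ * g) ∈ agreeOff P :=
  ⟨hg, fun x hx => (hσ _ ((hg x).not.2 hx)).symm⟩

theorem exists_mem_agreeOff_of_mem_closure {P : Set α} {b w e b' w' e' : Perm α}
    (hb : (b, b') ∈ agreeOff P) (hw : (w, w') ∈ agreeOff P) (he : (e, e') ∈ agreeOff P)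
    {g : Perm α} (hg : g ∈ Subgroup.closure {b, w, e}) :
    ∃ g' ∈ Subgroup.closure {b', w', e'}, (g, g') ∈ agreeOff P := by
  set K : Set (Perm α × Perm α) := {(b, b'), (w, w'), (e, e')}
  have hK : Subgroup.closure K ≤ agreeOff P := by
    rw [Subgroup.closure_le]
    rintro _ (rfl | rfl | rfl) <;> assumption
  have hfst : (Subgroup.closure K).map (MonoidHom.fst _ _) = Subgroup.closure {b, w, e} := by
    simp [MonoidHom.map_closure, K, Set.image_insert_eq]
  have hsnd : (Subgroup.closure K).map (MonoidHom.snd _ _) = Subgroup.closure {b', w', e'} := by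
    simp [MonoidHom.map_closure, K, Set.image_insert_eq]
  rw [← hfst] at hg
  obtain ⟨⟨g, g'⟩, hk, rfl⟩ := hg
  exact ⟨g', hsnd ▸ ⟨_, hk, rfl⟩, hK hk⟩

theorem SameFace.of_mem_agreeOff {P : Set α} {p q p' q' : Perm α}
    (hp : (p, p') ∈ agreeOff P) (hq : (q, q') ∈ agreeOff P) {x y : α}
    (h : SameFace p q x y) : (y ∈ P ↔ x ∈ P) ∧ (x ∉ P → SameFace p' q' x y) := by
  have hword : ∀ j : ℤ, ((q * p) ^ j, (q' * p') ^ j) ∈ agreeOff P := fun j =>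
    (agreeOff P).zpow_mem ((agreeOff P).mul_mem hq hp) j
  rcases h with ⟨j, rfl⟩ | ⟨j, rfl⟩
  · have hg := (agreeOff P).mul_mem (hword j) hp
    exact ⟨hg.1 x, fun hx => Or.inl ⟨j, hg.2 x hx⟩⟩
  · exact ⟨(hword j).1 x, fun hx => Or.inr ⟨j, (hword j).2 x hx⟩⟩

theorem SameComponent.of_mem_agreeOff {P : Set α} {b w e b' w' e' : Perm α}
    (hb : (b, b') ∈ agreeOff P) (hw : (w, w') ∈ agreeOff P) (he : (e, e') ∈ agreeOff P)
    {x y : α} (h : SameComponent b w e x y) :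
    (y ∈ P ↔ x ∈ P) ∧ (x ∉ P → SameComponent b' w' e' x y) := by
  obtain ⟨g, hg, rfl⟩ := h
  obtain ⟨g', hg', hgg'⟩ := exists_mem_agreeOff_of_mem_closure hb hw he hg
  exact ⟨hgg'.1 x, fun hx => ⟨g', hg', (hgg'.2 x hx).symm⟩⟩

theorem card_image_filter_sdiff {S T : Finset α} (hTS : T ⊆ S) (hT : T.Nonempty)
    {R R' : α → α → Prop} (hRT : ∀ x ∈ T, ∀ y ∈ T, R x y)
    (hstab : ∀ x y, R x y → (y ∈ T ↔ x ∈ T))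
    (hRR' : ∀ x y, x ∉ T → R x y → R' x y) (hR'R : ∀ x y, x ∉ T → R' x y → R x y)
    (hR' : ∀ x ∈ S \ T, R' x x) :
    (S.image fun x => S.filter (R x)).card
      = ((S \ T).image fun x => (S \ T).filter (R' x)).card + 1 := by
  have hclassT : ∀ x ∈ T, S.filter (R x) = T := fun x hx => by
    ext y
    simp only [Finset.mem_filter]
    exact ⟨fun hy => (hstab x y hy.2).2 hx, fun hy => ⟨hTS hy, hRT x hx y hy⟩⟩
  have hclass : ∀ x ∈ S \ T, S.filter (R x) = (S \ T).filter (R' x) := fun x hx => by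
    have hxT := (Finset.mem_sdiff.1 hx).2
    ext y
    simp only [Finset.mem_filter, Finset.mem_sdiff]
    exact ⟨fun hy => ⟨⟨hy.1, fun hyT => hxT ((hstab x y hy.2).1 hyT)⟩, hRR' x y hxT hy.2⟩,
      fun hy => ⟨hy.1.1, hR'R x y hxT hy.2⟩⟩
  have hsplit : (S.image fun x => S.filter (R x))
      = insert T ((S \ T).image fun x => (S \ T).filter (R' x)) := by
    rw [← Finset.union_sdiff_of_subset hTS, Finset.image_union, Finset.union_sdiff_of_subset hTS,
      Finset.image_congr hclassT, Finset.image_const hT, Finset.image_congr hclass,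
      Finset.insert_eq]
  have hT_notMem : T ∉ (S \ T).image fun x => (S \ T).filter (R' x) := by
    intro hmem
    obtain ⟨x, hx, hxT⟩ := Finset.mem_image.1 hmem
    have hx' : x ∈ (S \ T).filter (R' x) := Finset.mem_filter.2 ⟨hx, hR' x hx⟩
    exact (Finset.mem_sdiff.1 hx).2 (hxT ▸ hx')
  rw [hsplit, Finset.card_insert_of_notMem hT_notMem]

theorem numFaces_eq_numFaces_sdiff_add_one {S T : Finset α} (hTS : T ⊆ S) (hT : T.Nonempty)
    {p q p' q' : Perm α} (hface : ∀ x ∈ T, ∀ y ∈ T, SameFace p q x y)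
    (hp : (p, p') ∈ agreeOff ↑T) (hq : (q, q') ∈ agreeOff ↑T)
    (hp' : (p', p) ∈ agreeOff ↑T) (hq' : (q', q) ∈ agreeOff ↑T) :
    numFaces S p q = numFaces (S \ T) p' q' + 1 :=
  card_image_filter_sdiff hTS hT hface (fun _ _ h => (h.of_mem_agreeOff hp hq).1)
    (fun _ _ hx h => (h.of_mem_agreeOff hp hq).2 hx)
    (fun _ _ hx h => (h.of_mem_agreeOff hp' hq').2 hx) (fun _ _ => Or.inr ⟨0, by simp⟩)

theorem numComponents_eq_numComponents_sdiff_add_one {S T : Finset α} (hTS : T ⊆ S)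
    (hT : T.Nonempty) {b w e b' w' e' : Perm α}
    (hcomp : ∀ x ∈ T, ∀ y ∈ T, SameComponent b w e x y)
    (hb : (b, b') ∈ agreeOff ↑T) (hw : (w, w') ∈ agreeOff ↑T) (he : (e, e') ∈ agreeOff ↑T)
    (hb' : (b', b) ∈ agreeOff ↑T) (hw' : (w', w) ∈ agreeOff ↑T) (he' : (e', e) ∈ agreeOff ↑T) :
    numComponents S b w e = numComponents (S \ T) b' w' e' + 1 :=
  card_image_filter_sdiff hTS hT hcomp (fun _ _ h => (h.of_mem_agreeOff hb hw he).1)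
    (fun _ _ hx h => (h.of_mem_agreeOff hb hw he).2 hx)
    (fun _ _ hx h => (h.of_mem_agreeOff hb' hw' he').2 hx)
    (fun _ _ => ⟨1, Subgroup.one_mem _, rfl⟩)

section Pair

variable {s t : α}

theorem removeP_eq_swap_mul {f : Perm α} (hs : f s = t) (ht : f t = s) :
    removeP f s t = swap s t * f := by
  simp [removeP, hs, ht, ← Perm.one_def]

theorem apply_mem_pair_iff {f : Perm α} (hs : f s = t) (ht : f t = s) (x : α) :
    f x ∈ ({s, t} : Set α) ↔ x ∈ ({s, t} : Set α) :=
  calc f x ∈ ({s, t} : Set α) ↔ f x ∈ f '' {s, t} := by rw [Set.image_pair, hs, ht, Set.pair_comm]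
    _ ↔ x ∈ ({s, t} : Set α) := f.injective.mem_set_image

theorem mem_agreeOff_swap_mul {f : Perm α} (hs : f s = t) (ht : f t = s) :
    (f, swap s t * f) ∈ agreeOff ↑({s, t} : Finset α) ∧
      (swap s t * f, f) ∈ agreeOff ↑({s, t} : Finset α) := by
  have hswap : ∀ x ∉ ({s, t} : Set α), swap s t x = x := fun x hx => by
    simp only [Set.mem_insert_iff, Set.mem_singleton_iff, not_or] at hx
    exact swap_apply_of_ne_of_ne hx.1 hx.2
  have hswapf : ∀ x, (swap s t * f) x ∈ ({s, t} : Set α) ↔ x ∈ ({s, t} : Set α) := fun x =>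
    (apply_mem_pair_iff (swap_apply_left s t) (swap_apply_right s t) (f x)).trans
      (apply_mem_pair_iff hs ht x)
  rw [Finset.coe_pair]
  refine ⟨mem_agreeOff_mul (apply_mem_pair_iff hs ht) hswap, ?_⟩
  simpa [← mul_assoc] using mem_agreeOff_mul hswapf hswap

theorem sameFace_of_mem_pair {p q : Perm α} (hs : p s = t) (ht : p t = s) :
    ∀ x ∈ ({s, t} : Finset α), ∀ y ∈ ({s, t} : Finset α), SameFace p q x y := by
  simp only [Finset.mem_insert, Finset.mem_singleton]
  rintro x (rfl | rfl) y (rfl | rfl)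
  · exact Or.inr ⟨0, by simp⟩
  · exact Or.inl ⟨0, by simp [hs]⟩
  · exact Or.inl ⟨0, by simp [ht]⟩
  · exact Or.inr ⟨0, by simp⟩

theorem sameComponent_of_mem_pair {b w e : Perm α} (hs : e s = t) (ht : e t = s) :
    ∀ x ∈ ({s, t} : Finset α), ∀ y ∈ ({s, t} : Finset α), SameComponent b w e x y := by
  simp only [Finset.mem_insert, Finset.mem_singleton]
  rintro x (rfl | rfl) y (rfl | rfl)
  · exact ⟨1, Subgroup.one_mem _, rfl⟩
  · exact ⟨e, Subgroup.subset_closure (by simp), hs⟩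
  · exact ⟨e, Subgroup.subset_closure (by simp), ht⟩
  · exact ⟨1, Subgroup.one_mem _, rfl⟩

theorem numFaces_eq_numFaces_removeP_add_one {S : Finset α} (hst : {s, t} ⊆ S)
    {p q : Perm α} (hps : p s = t) (hpt : p t = s) (hqs : q s = t) (hqt : q t = s) :
    numFaces S p q = numFaces (S \ {s, t}) (removeP p s t) (removeP q s t) + 1 := by
  obtain ⟨hp, hp'⟩ := mem_agreeOff_swap_mul hps hpt
  obtain ⟨hq, hq'⟩ := mem_agreeOff_swap_mul hqs hqt
  rw [removeP_eq_swap_mul hps hpt, removeP_eq_swap_mul hqs hqt]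
  exact numFaces_eq_numFaces_sdiff_add_one hst (Finset.insert_nonempty _ _)
    (sameFace_of_mem_pair hps hpt) hp hq hp' hq'

theorem numComponents_eq_numComponents_removeP_add_one {S : Finset α} (hst : {s, t} ⊆ S)
    {b w e : Perm α} (hbs : b s = t) (hbt : b t = s) (hws : w s = t) (hwt : w t = s)
    (hes : e s = t) (het : e t = s) :
    numComponents S b w e
      = numComponents (S \ {s, t}) (removeP b s t) (removeP w s t) (removeP e s t) + 1 := by
  obtain ⟨hb, hb'⟩ := mem_agreeOff_swap_mul hbs hbt
  obtain ⟨hw, hw'⟩ := mem_agreeOff_swap_mul hws hwt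
  obtain ⟨he, he'⟩ := mem_agreeOff_swap_mul hes het
  rw [removeP_eq_swap_mul hbs hbt, removeP_eq_swap_mul hws hwt, removeP_eq_swap_mul hes het]
  exact numComponents_eq_numComponents_sdiff_add_one hst (Finset.insert_nonempty _ _)
    (sameComponent_of_mem_pair hes het) hb hw he hb' hw' he'

theorem numEdges_eq_numEdges_sdiff_add_one {S : Finset α} (hst : s ≠ t) (hsub : {s, t} ⊆ S) :
    numEdges S = numEdges (S \ {s, t}) + 1 := by
  have hcard := Finset.card_sdiff_add_card_eq_card hsub
  rw [Finset.card_pair hst] at hcard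
  unfold numEdges
  omega

end Pair

/-- if both extremities of the edge `E₀ = {s, e s}` of the map
`M = (S,b,w,e)` are leaves, then `E₀` is straight, and `M \ E₀` has two fewer
vertices, one fewer edge, one fewer face and one fewer connected component than `M`;
consequently `d(M \ E₀) = d(M)`. -/
theorem remove_edge_both_leaves (S : Finset α) (b w e : Equiv.Perm α)
    (hb : IsPairing S b) (hw : IsPairing S w) (he : IsPairing S e)
    (s : α) (hs : s ∈ S)
    (hblackleaf : b s = e s) (hwhiteleaf : w s = e s) :
    IsStraight b w s (e s) ∧
    numVertices S b w e
      = numVertices (S \ {s, e s}) (removeP b s (e s)) (removeP w s (e s))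
          (removeP e s (e s)) + 2 ∧
    numEdges S = numEdges (S \ {s, e s}) + 1 ∧
    numFaces S b w = numFaces (S \ {s, e s}) (removeP b s (e s)) (removeP w s (e s)) + 1 ∧
    numComponents S b w e
      = numComponents (S \ {s, e s}) (removeP b s (e s)) (removeP w s (e s))
          (removeP e s (e s)) + 1 ∧
    dInv (S \ {s, e s}) (removeP b s (e s)) (removeP w s (e s)) (removeP e s (e s))
      = dInv S b w e := by
  have hst : s ≠ e s := fun h => (he.2 s).2 hs h.symm
  have het : e (e s) = s := he.1 s
  have ht : e s ∈ S := (he.2 (e s)).1 (het.trans_ne hst)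
  have hbt : b (e s) = s := hblackleaf ▸ hb.1 s
  have hwt : w (e s) = s := hwhiteleaf ▸ hw.1 s
  have hsub : {s, e s} ⊆ S := Finset.insert_subset hs (Finset.singleton_subset_iff.2 ht)
  have hV₁ := numFaces_eq_numFaces_removeP_add_one hsub hblackleaf hbt rfl het
  have hV₂ := numFaces_eq_numFaces_removeP_add_one hsub hwhiteleaf hwt rfl het
  have hF := numFaces_eq_numFaces_removeP_add_one hsub hblackleaf hbt hwhiteleaf hwt
  have hC := numComponents_eq_numComponents_removeP_add_one hsub
    hblackleaf hbt hwhiteleaf hwt rfl het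
  have hE := numEdges_eq_numEdges_sdiff_add_one hst hsub
  have hV : numVertices S b w e = numVertices (S \ {s, e s}) (removeP b s (e s))
      (removeP w s (e s)) (removeP e s (e s)) + 2 := by
    unfold numVertices
    omega
  refine ⟨⟨Or.inl ⟨0, by simp [hblackleaf]⟩, ⟨0, by simp [hblackleaf]⟩⟩, hV, hE, hF, hC, ?_⟩
  unfold dInv eulerChar
  rw [hV, hE, hF, hC]
  push_cast
  ring
end
end
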